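/- Let M be a model category with homotopy category functor h : M → Ho(M). If two diagrams F : I → M and G : J → M in diag(M) are related by a span of maps which are open up to homotopy, then F and G are bisimilar up to homotopy, i.e. h∘F and h∘G are bisimilar diagrams in Ho(M). -/

import Mathlib

/- STATEMENT 12: Let M be a model category with homotopy category functor
h : M → Ho(M). If two diagrams F : I ⥤ M and G : J ⥤ M are related by a span of maps
which are open up to homotopy, then F and G are bisimilar up to homotopy, i.e. h∘F and
h∘G are bisimilar diagrams in Ho(M). -/

open CategoryTheory

universe w v u

/-- A retract of a morphism. -/
def IsRetractOf {M : Type u} [Category.{v} M] {X Y X' Y' : M}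
    (f : X ⟶ Y) (f' : X' ⟶ Y') : Prop :=
  ∃ (s : X ⟶ X') (r : X' ⟶ X) (s' : Y ⟶ Y') (r' : Y' ⟶ Y),
    s ≫ r = 𝟙 X ∧ s' ≫ r' = 𝟙 Y ∧ s ≫ f' = f ≫ s' ∧ f' ≫ r' = r ≫ f

/-- A model category structure on a bicomplete category: classes of cofibrations,
fibrations and weak equivalences such that weak equivalences are closed under retracts
and satisfy two-out-of-three, and (cof, weq ∩ fib) and (cof ∩ weq, fib) are weak
factorization systems. -/
class ModelCategory (M : Type u) [Category.{v} M]
    [Limits.HasLimits M] [Limits.HasColimits M] where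
  weq : MorphismProperty M
  cof : MorphismProperty M
  fib : MorphismProperty M
  weq_comp : ∀ {X Y Z : M} (f : X ⟶ Y) (g : Y ⟶ Z), weq f → weq g → weq (f ≫ g)
  weq_of_comp_left : ∀ {X Y Z : M} (f : X ⟶ Y) (g : Y ⟶ Z), weq f → weq (f ≫ g) → weq g
  weq_of_comp_right : ∀ {X Y Z : M} (f : X ⟶ Y) (g : Y ⟶ Z), weq g → weq (f ≫ g) → weq f
  weq_retract : ∀ {X Y X' Y' : M} (f : X ⟶ Y) (f' : X' ⟶ Y'),
    IsRetractOf f f' → weq f' → weq f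
  cof_retract : ∀ {X Y X' Y' : M} (f : X ⟶ Y) (f' : X' ⟶ Y'),
    IsRetractOf f f' → cof f' → cof f
  fib_retract : ∀ {X Y X' Y' : M} (f : X ⟶ Y) (f' : X' ⟶ Y'),
    IsRetractOf f f' → fib f' → fib f
  lift_triv_fib : ∀ {A B X Y : M} (i : A ⟶ B) (p : X ⟶ Y),
    cof i → fib p → weq p → HasLiftingProperty i p
  lift_triv_cof : ∀ {A B X Y : M} (i : A ⟶ B) (p : X ⟶ Y),
    cof i → weq i → fib p → HasLiftingProperty i p
  factor_cof_trivFib : ∀ {X Y : M} (f : X ⟶ Y),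
    ∃ (Z : M) (i : X ⟶ Z) (p : Z ⟶ Y), cof i ∧ fib p ∧ weq p ∧ i ≫ p = f
  factor_trivCof_fib : ∀ {X Y : M} (f : X ⟶ Y),
    ∃ (Z : M) (i : X ⟶ Z) (p : Z ⟶ Y), cof i ∧ weq i ∧ fib p ∧ i ≫ p = f

/-- Openness of a map in `diag(K)`. -/
def IsOpenDiagMap {K : Type*} [Category K] {I : Type*} [Category I] {J : Type*}
    [Category J] (F : I ⥤ K) (G : J ⥤ K) (f : I ⥤ J) (μ : F ⟶ f ⋙ G) : Prop :=
  Function.Surjective f.obj ∧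
    (∀ (i : I) (j' : J) (ψ : f.obj i ⟶ j'),
      ∃ (j : I) (φ : i ⟶ j) (h : f.obj j = j'), f.map φ ≫ eqToHom h = ψ) ∧
    IsIso μ

/-- Bisimilarity of two diagrams. -/
def Bisimilar {K : Type*} [Category K] {I : Type*} [Category I] {J : Type*} [Category J]
    (F : I ⥤ K) (G : J ⥤ K) : Prop :=
  ∃ R : Set ((i : I) × (j : J) × (F.obj i ≅ G.obj j)),
    (∀ i : I, ∃ p ∈ R, p.1 = i) ∧
    (∀ j : J, ∃ p ∈ R, p.2.1 = j) ∧
    (∀ (i : I) (j : J) (η : F.obj i ≅ G.obj j), ⟨i, j, η⟩ ∈ R →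
      ∀ (i' : I) (φ : i ⟶ i'),
        ∃ (j' : J) (η' : F.obj i' ≅ G.obj j') (ψ : j ⟶ j'),
          ⟨i', j', η'⟩ ∈ R ∧ F.map φ ≫ η'.hom = η.hom ≫ G.map ψ) ∧
    (∀ (i : I) (j : J) (η : F.obj i ≅ G.obj j), ⟨i, j, η⟩ ∈ R →
      ∀ (j' : J) (ψ : j ⟶ j'),
        ∃ (i' : I) (η' : F.obj i' ≅ G.obj j') (φ : i ⟶ i'),
          ⟨i', j', η'⟩ ∈ R ∧ F.map φ ≫ η'.hom = η.hom ≫ G.map ψ)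

/-! The two natural isomorphisms of the open legs combine into a natural isomorphism
`f ⋙ F ≅ g ⋙ G`, and the relation `{(f l, g l, η_l) | l}` is a bisimulation: its projections
are surjective because `f` and `g` are, and a morphism out of `f l` (or `g l`) lifts to a
morphism `l ⟶ l'` of the apex, whose image under the other leg answers it by naturality of `η`.
In `Ho(M)` this applies verbatim to `h ∘ F ⟵ h ∘ H ⟶ h ∘ G`. -/

namespace Bisimilar

variable {K : Type*} [Category K] {I : Type*} [Category I] {J : Type*} [Category J]
  {L : Type*} [Category L] {F : I ⥤ K} {G : J ⥤ K}

theorem of_natIso {f : L ⥤ I} {g : L ⥤ J} (η : f ⋙ F ≅ g ⋙ G)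
    (hf_surj : Function.Surjective f.obj) (hg_surj : Function.Surjective g.obj)
    (hf_lift : ∀ (l : L) (i' : I) (φ : f.obj l ⟶ i'),
      ∃ (l' : L) (φL : l ⟶ l') (h : f.obj l' = i'), f.map φL ≫ eqToHom h = φ)
    (hg_lift : ∀ (l : L) (j' : J) (ψ : g.obj l ⟶ j'),
      ∃ (l' : L) (ψL : l ⟶ l') (h : g.obj l' = j'), g.map ψL ≫ eqToHom h = ψ) :
    Bisimilar F G := by
  refine ⟨Set.range fun l => ⟨f.obj l, g.obj l, η.app l⟩, ?_, ?_, ?_, ?_⟩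
  · intro i
    obtain ⟨l, rfl⟩ := hf_surj i
    exact ⟨_, ⟨l, rfl⟩, rfl⟩
  · intro j
    obtain ⟨l, rfl⟩ := hg_surj j
    exact ⟨_, ⟨l, rfl⟩, rfl⟩
  · rintro _ _ _ ⟨l, ⟨⟩⟩ i' φ
    obtain ⟨l', φL, rfl, rfl⟩ := hf_lift l i' φ
    refine ⟨g.obj l', η.app l', g.map φL, ⟨l', rfl⟩, ?_⟩
    simpa using η.hom.naturality φL
  · rintro _ _ _ ⟨l, ⟨⟩⟩ j' ψ
    obtain ⟨l', ψL, rfl, rfl⟩ := hg_lift l j' ψ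
    refine ⟨f.obj l', η.app l', f.map ψL, ⟨l', rfl⟩, ?_⟩
    simpa using η.hom.naturality ψL

theorem of_span_isOpenDiagMap {H : L ⥤ K} {f : L ⥤ I} {g : L ⥤ J}
    {α : H ⟶ f ⋙ F} {β : H ⟶ g ⋙ G}
    (hf : IsOpenDiagMap H F f α) (hg : IsOpenDiagMap H G g β) : Bisimilar F G :=
  have := hf.2.2
  have := hg.2.2
  of_natIso ((asIso α).symm ≪≫ asIso β) hf.1 hg.1 hf.2.1 hg.2.1

end Bisimilar

/-- If the two legs of a span `F ⟵ H ⟶ G` of diagrams in a model category `M` become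
open after composing with the homotopy category functor `h = W.Q : M ⥤ Ho(M)`
(localization at the weak equivalences), then `h∘F` and `h∘G` are bisimilar, i.e. `F`
and `G` are bisimilar up to homotopy. -/
theorem bisimilar_up_to_homotopy_of_span_open_up_to_homotopy
    {M : Type u} [Category.{v} M] [Limits.HasLimits M] [Limits.HasColimits M]
    [mc : ModelCategory M]
    {I J L : Type w} [SmallCategory I] [SmallCategory J] [SmallCategory L]
    (F : I ⥤ M) (G : J ⥤ M) (H : L ⥤ M)
    (f : L ⥤ I) (μ : H ⟶ f ⋙ F) (g : L ⥤ J) (ν : H ⟶ g ⋙ G)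
    (hf : IsOpenDiagMap (H ⋙ mc.weq.Q) (F ⋙ mc.weq.Q) f
      (Functor.whiskerRight μ mc.weq.Q ≫ (Functor.associator f F mc.weq.Q).hom))
    (hg : IsOpenDiagMap (H ⋙ mc.weq.Q) (G ⋙ mc.weq.Q) g
      (Functor.whiskerRight ν mc.weq.Q ≫ (Functor.associator g G mc.weq.Q).hom)) :
    Bisimilar (F ⋙ mc.weq.Q) (G ⋙ mc.weq.Q) :=
  Bisimilar.of_span_isOpenDiagMap hf hg
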